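/- Let C ⊆ F_q^n be a linear code, m ≥ 2, and M := (1/2)(m−2)(m+3). Then ρ_r(T_m^1, C^{⊗m}) ≥ (1/12^{m−2}) · ρ_r(T_2^1, C^{⊗2}) · δ(C)^M, where δ(C) is the normalized minimum distance of C. -/

import Mathlib

noncomputable section

open Polynomial

/-- Normalized Hamming weight. -/
def normWt {ι F : Type*} [Fintype ι] [Zero F] (x : ι → F) : ℝ :=
  (Nat.card {p : ι // x p ≠ 0} : ℝ) / (Fintype.card ι : ℝ)

/-- Normalized Hamming distance from a word to a set of words. -/
def distTo {ι F : Type*} [Fintype ι] [AddGroup F] (x : ι → F) (S : Set (ι → F)) : ℝ :=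
  sInf ((fun c => normWt (x - c)) '' S)

/-- Normalized minimum distance of a code. -/
def minDist {ι F : Type*} [Fintype ι] [Zero F] (S : Set (ι → F)) : ℝ :=
  sInf (normWt '' (S \ {0}))

/-- Restriction of a word on a grid to the axis-`i` line through `y`. -/
def lineRestrict {F : Type*} {m : ℕ} {n : Fin m → ℕ}
    (x : (∀ j, Fin (n j)) → F) (i : Fin m) (y : ∀ j, Fin (n j)) : Fin (n i) → F :=
  fun s => x (Function.update y i s)

/-- `‖x‖_i`: the fraction of axis-`i` parallel lines on which `x` is nonzero. -/
def lineWt {F : Type*} [Zero F] {m : ℕ} {n : Fin m → ℕ}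
    (x : (∀ j, Fin (n j)) → F) (i : Fin m) : ℝ :=
  (Nat.card {y : ∀ j, Fin (n j) // lineRestrict x i y ≠ 0} : ℝ) /
    (Fintype.card (∀ j, Fin (n j)) : ℝ)

/-- `C^{(i)}`: words all of whose axis-`i` lines belong to `C i`. -/
def axisCode {F : Type*} {m : ℕ} {n : Fin m → ℕ}
    (C : ∀ i, Set (Fin (n i) → F)) (i : Fin m) : Set ((∀ j, Fin (n j)) → F) :=
  {x | ∀ y, lineRestrict x i y ∈ C i}

/-- Tensor product code `C₁ ⊗ ⋯ ⊗ C_m`. -/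
def prodCode {F : Type*} {m : ℕ} {n : Fin m → ℕ}
    (C : ∀ i, Set (Fin (n i) → F)) : Set ((∀ j, Fin (n j)) → F) :=
  ⋂ i, axisCode C i

/-- Dual code w.r.t. the standard bilinear form. -/
def dualCode {ι F : Type*} [Fintype ι] [CommRing F] (S : Set (ι → F)) : Set (ι → F) :=
  {x | ∀ c ∈ S, ∑ p, x p * c p = 0}

/-- `C₁ ⊞ ⋯ ⊞ C_m := (C₁^⊥ ⊗ ⋯ ⊗ C_m^⊥)^⊥`. -/
def boxCode {F : Type*} [CommRing F] {m : ℕ} {n : Fin m → ℕ}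
    (C : ∀ i, Set (Fin (n i) → F)) : Set ((∀ j, Fin (n j)) → F) :=
  dualCode (prodCode (fun i => dualCode (C i)))

/-- `ρ`-product-expansion of a collection of codes. -/
def productExpanding {F : Type*} [Field F] {m : ℕ} {n : Fin m → ℕ}
    (C : ∀ i, Set (Fin (n i) → F)) (ρ : ℝ) : Prop :=
  ∀ c ∈ boxCode C, ∃ a : Fin m → ((∀ j, Fin (n j)) → F),
    (∀ i, a i ∈ axisCode C i) ∧ c = ∑ i, a i ∧
      ρ * ∑ i, lineWt (a i) i ≤ normWt c

/-- The product-expansion constant `ρ(𝒞)`. -/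
def prodExpConst {F : Type*} [Field F] {m : ℕ} {n : Fin m → ℕ}
    (C : ∀ i, Set (Fin (n i) → F)) : ℝ :=
  sSup {ρ : ℝ | productExpanding C ρ}

/-- Expected distance under the axis-parallel line test `T_m^1`. -/
def lineTestE {F : Type*} [Field F] {m : ℕ} {n : Fin m → ℕ}
    (C : ∀ i, Set (Fin (n i) → F)) (x : (∀ j, Fin (n j)) → F) : ℝ :=
  (∑ i, (∑ y : ∀ j, Fin (n j), distTo (lineRestrict x i y) (C i)) /
      (Fintype.card (∀ j, Fin (n j)) : ℝ)) / (m : ℝ)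

/-- Robustness constant `ρ_r(T_m^1, ⊗𝒞)` of the axis-parallel line test. -/
def lineRobustConst {F : Type*} [Field F] {m : ℕ} {n : Fin m → ℕ}
    (C : ∀ i, Set (Fin (n i) → F)) : ℝ :=
  sSup {α : ℝ | ∀ x, α * distTo x (prodCode C) ≤ lineTestE C x}

/-- Agreement-testability constant `ρ_a(⊗𝒞)`. -/
def agreeConst {F : Type*} [Field F] {m : ℕ} {n : Fin m → ℕ}
    (C : ∀ i, Set (Fin (n i) → F)) : ℝ :=
  sSup {α : ℝ | ∀ c : Fin m → ((∀ j, Fin (n j)) → F),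
    (∀ i, c i ∈ axisCode C i) → ∃ z ∈ prodCode C,
      α * ((∑ i, lineWt (c i - z) i) / (m : ℝ)) ≤
        (∑ i, ∑ j, normWt (c i - c j)) / ((m : ℝ) ^ 2)}

/-- `C^{⊗k}` on the grid `[n]^k`. -/
def tensorPow {F : Type*} {n : ℕ} (C : Set (Fin n → F)) (k : ℕ) :
    Set ((Fin k → Fin n) → F) :=
  {x | ∀ (i : Fin k) (y : Fin k → Fin n), (fun s => x (Function.update y i s)) ∈ C}

/-- Restriction of a word to the axis-parallel `k`-flat determined by the axes
`e : Fin k ↪ Fin m` and base point `y`. -/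
def flatRestrict {F : Type*} {n m k : ℕ} (x : (Fin m → Fin n) → F)
    (e : Fin k ↪ Fin m) (y : Fin m → Fin n) : (Fin k → Fin n) → F :=
  fun z => x (fun j => if h : ∃ l, e l = j then z h.choose else y j)

/-- Expected distance under the axis-parallel `k`-flat test `T_m^k` for `C^{⊗m}`. -/
def flatTestE {F : Type*} [Field F] {n : ℕ} (C : Set (Fin n → F)) (m k : ℕ)
    (x : (Fin m → Fin n) → F) : ℝ :=
  (∑ e : Fin k ↪ Fin m, ∑ y : Fin m → Fin n,
      distTo (flatRestrict x e y) (tensorPow C k)) /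
    ((Fintype.card (Fin k ↪ Fin m) : ℝ) * (Fintype.card (Fin m → Fin n) : ℝ))

/-- Robustness constant `ρ_r(T_m^k, C^{⊗m})`. -/
def flatRobustConst {F : Type*} [Field F] {n : ℕ} (C : Set (Fin n → F)) (m k : ℕ) : ℝ :=
  sSup {α : ℝ | ∀ x : (Fin m → Fin n) → F,
    α * distTo x (tensorPow C m) ≤ flatTestE C m k x}

/-- The polynomial `Σ aᵢ xⁱ` of a word of length `n`. -/
def wordPoly {F : Type*} [CommSemiring F] {n : ℕ} (a : Fin n → F) : Polynomial F :=
  ∑ i, Polynomial.C (a i) * Polynomial.X ^ (i : ℕ)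

/-- The cyclic code of length `n` with check polynomial `p`. -/
def cyclicCode {F : Type*} [CommRing F] (n : ℕ) (p : Polynomial F) : Set (Fin n → F) :=
  {a | (Polynomial.X ^ n - 1) ∣ p * wordPoly a}

/-- Check polynomial `(x-1)(x-ω)⋯(x-ω^{k-1})` of the primitive Reed–Solomon code. -/
def rsCheck {F : Type*} [CommRing F] (k : ℕ) (ω : F) : Polynomial F :=
  ∏ i ∈ Finset.range k, (Polynomial.X - Polynomial.C (ω ^ i))

/-- The primitive Reed–Solomon evaluation code of degree `< k` at the nonzero points. -/
def evalRS (F : Type*) [Field F] [Fintype F] (k : ℕ) : Set (Fˣ → F) :=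
  {c | ∃ p : Polynomial F, p.degree < (k : ℕ) ∧ ∀ a : Fˣ, c a = p.eval (a : F)}

/-- Words on `ι₁ × ι₂` all of whose columns lie in `S`. -/
def colCode {ι₁ ι₂ F : Type*} (S : Set (ι₁ → F)) : Set (ι₁ × ι₂ → F) :=
  {x | ∀ j, (fun i => x (i, j)) ∈ S}

/-- Words on `ι₁ × ι₂` all of whose rows lie in `S`. -/
def rowCode {ι₁ ι₂ F : Type*} (S : Set (ι₂ → F)) : Set (ι₁ × ι₂ → F) :=
  {x | ∀ i, (fun j => x (i, j)) ∈ S}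

/-- The multivariate polynomial `Σ_y x_y ∏ᵢ Xᵢ^{yᵢ}` of a word on the grid `[n]^m`. -/
def wordPolyMv {F : Type*} [CommSemiring F] {m n : ℕ} (x : (Fin m → Fin n) → F) :
    MvPolynomial (Fin m) F :=
  ∑ y : Fin m → Fin n, MvPolynomial.C (x y) * ∏ i, MvPolynomial.X i ^ ((y i : ℕ))

/-! The axis-parallel line test on `[n]^m` factors through the hyperplane test: averaging the
line test of `C^{⊗k}` over all axis-parallel `k`-flats of `[n]^m` gives back the line test of
`C^{⊗m}`, because every axis-parallel line lies in equally many such flats. Hence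
`ρ(T_m^1) ≥ ρ(T_m^k) · ρ(T_k^1)`. Taking `k = m - 1` and feeding in the hyperplane bound
`δ^k / 12` for `k = 3, …, m` gives the factor `12^{-(m-2)} δ^{3 + ⋯ + m}`, and
`3 + ⋯ + m = (m - 2)(m + 3) / 2`. -/

section Distance

variable {ι F : Type*} [Fintype ι]

lemma normWt_nonneg [Zero F] (x : ι → F) : 0 ≤ normWt x := by
  unfold normWt; positivity

lemma normWt_zero [Zero F] : normWt (0 : ι → F) = 0 := by
  simp [normWt]

lemma normWt_pos [Zero F] {x : ι → F} (hx : x ≠ 0) : 0 < normWt x := by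
  obtain ⟨p, hp⟩ := Function.ne_iff.mp hx
  have : Nonempty {p : ι // x p ≠ 0} := ⟨⟨p, hp⟩⟩
  have : Nonempty ι := ⟨p⟩
  have := Nat.card_pos (α := {p : ι // x p ≠ 0})
  have := Fintype.card_pos (α := ι)
  unfold normWt
  positivity

lemma minDist_nonneg [Zero F] (S : Set (ι → F)) : 0 ≤ minDist S :=
  Real.sInf_nonneg (by rintro _ ⟨c, _, rfl⟩; exact normWt_nonneg _)

variable [AddGroup F] {S : Set (ι → F)} {x : ι → F}

lemma distTo_nonneg (x : ι → F) (S : Set (ι → F)) : 0 ≤ distTo x S :=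
  Real.sInf_nonneg (by rintro _ ⟨c, _, rfl⟩; exact normWt_nonneg _)

lemma distTo_le_normWt_sub {c : ι → F} (hc : c ∈ S) : distTo x S ≤ normWt (x - c) :=
  csInf_le ⟨0, by rintro _ ⟨d, _, rfl⟩; exact normWt_nonneg _⟩ ⟨c, hc, rfl⟩

lemma distTo_eq_zero_of_mem (hx : x ∈ S) : distTo x S = 0 :=
  le_antisymm ((distTo_le_normWt_sub hx).trans_eq (by rw [sub_self, normWt_zero]))
    (distTo_nonneg x S)

lemma distTo_pos [Finite F] (hS : S.Nonempty) (hx : x ∉ S) : 0 < distTo x S := by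
  obtain ⟨c, hc, hdist⟩ :=
    (hS.image fun c => normWt (x - c)).csInf_mem (S.toFinite.image _)
  rw [distTo, ← hdist]
  exact normWt_pos (sub_ne_zero.mpr fun h => hx (h ▸ hc))

end Distance

section Robustness

open Finset

variable {F : Type*} [Field F] {n : ℕ} (C : Set (Fin n → F))

lemma flatTestE_nonneg (m k : ℕ) (x : (Fin m → Fin n) → F) : 0 ≤ flatTestE C m k x :=
  div_nonneg (sum_nonneg fun _ _ => sum_nonneg fun _ _ => distTo_nonneg _ _) (by positivity)

lemma flatRobustConst_nonneg (m k : ℕ) : 0 ≤ flatRobustConst C m k :=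
  Real.sSup_nonneg' ⟨0, fun x => by simpa using flatTestE_nonneg C m k x, le_rfl⟩

lemma flatRobustConst_mul_distTo_le (m k : ℕ) (x : (Fin m → Fin n) → F) :
    flatRobustConst C m k * distTo x (tensorPow C m) ≤ flatTestE C m k x := by
  rcases (distTo_nonneg x (tensorPow C m)).eq_or_lt with h | h
  · rw [← h, mul_zero]
    exact flatTestE_nonneg C m k x
  · rw [← le_div_iff₀ h]
    exact Real.sSup_le (fun α hα => (le_div_iff₀ h).mpr (hα x))
      (div_nonneg (flatTestE_nonneg C m k x) h.le)

lemma le_flatRobustConst {m k : ℕ} {x₀ : (Fin m → Fin n) → F}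
    (hx₀ : 0 < distTo x₀ (tensorPow C m)) {α : ℝ}
    (hα : ∀ x, α * distTo x (tensorPow C m) ≤ flatTestE C m k x) :
    α ≤ flatRobustConst C m k :=
  le_csSup ⟨flatTestE C m k x₀ / distTo x₀ (tensorPow C m),
    fun _ hβ => (le_div_iff₀ hx₀).mpr (hβ x₀)⟩ hα

-- Every `α` is admissible here, and `sSup` of the unbounded set `ℝ` is `0` by convention.
lemma flatRobustConst_eq_zero_of_forall_mem {m k : ℕ} (hC : ∀ w, w ∈ C) :
    flatRobustConst C m k = 0 := by
  have hall : {α : ℝ | ∀ x, α * distTo x (tensorPow C m) ≤ flatTestE C m k x} = Set.univ :=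
    Set.eq_univ_of_forall fun α x => by
      rw [distTo_eq_zero_of_mem (show x ∈ tensorPow C m from fun _ _ => hC _), mul_zero]
      exact flatTestE_nonneg C m k x
  rw [flatRobustConst, hall, Real.sSup_univ]

lemma exists_distTo_tensorPow_pos [Finite F] {m : ℕ} (hm : 0 < m) (h0 : 0 ∈ C)
    {w : Fin n → F} (hw : w ∉ C) : ∃ x, 0 < distTo x (tensorPow C m) := by
  obtain ⟨p, -⟩ := Function.ne_iff.mp (ne_of_mem_of_not_mem h0 hw)
  refine ⟨fun y => w (y ⟨0, hm⟩), distTo_pos ⟨0, fun _ _ => h0⟩ fun hx => hw ?_⟩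
  simpa using hx ⟨0, hm⟩ fun _ => p

end Robustness

section Flats

open Finset

variable {n m k : ℕ}

-- `flatRestrict x e Y` is `x ∘ flatPoint e Y` definitionally.
def flatPoint (e : Fin k ↪ Fin m) (Y : Fin m → Fin n) (z : Fin k → Fin n) : Fin m → Fin n :=
  fun j => if h : ∃ l, e l = j then z h.choose else Y j

lemma flatPoint_apply_embedding (e : Fin k ↪ Fin m) (Y : Fin m → Fin n) (z : Fin k → Fin n)
    (l : Fin k) : flatPoint e Y z (e l) = z l := by
  have h : ∃ l', e l' = e l := ⟨l, rfl⟩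
  rw [flatPoint, dif_pos h, e.injective h.choose_spec]

lemma flatPoint_apply_of_notMem_range (e : Fin k ↪ Fin m) (Y : Fin m → Fin n)
    (z : Fin k → Fin n) {j : Fin m} (hj : j ∉ Set.range e) : flatPoint e Y z j = Y j :=
  dif_neg hj

lemma flatPoint_comp_embedding (e : Fin k ↪ Fin m) (Y : Fin m → Fin n) (z : Fin k → Fin n) :
    flatPoint e Y z ∘ e = z :=
  funext (flatPoint_apply_embedding e Y z)

lemma flatPoint_flatPoint (e : Fin k ↪ Fin m) (Y : Fin m → Fin n) (z : Fin k → Fin n) :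
    flatPoint e (flatPoint e Y z) (Y ∘ e) = Y := by
  funext j
  by_cases hj : j ∈ Set.range e
  · obtain ⟨l, rfl⟩ := hj
    rw [flatPoint_apply_embedding, Function.comp_apply]
  · rw [flatPoint_apply_of_notMem_range e _ _ hj, flatPoint_apply_of_notMem_range e _ _ hj]

lemma flatRestrict_flatRestrict {F : Type*} {k' : ℕ} (x : (Fin m → Fin n) → F)
    (e : Fin k ↪ Fin m) (f : Fin k' ↪ Fin k) (Y : Fin m → Fin n) (z : Fin k → Fin n) :
    flatRestrict (flatRestrict x e Y) f z = flatRestrict x (f.trans e) (flatPoint e Y z) := by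
  funext u
  change x (flatPoint e Y (flatPoint f z u)) = x (flatPoint (f.trans e) (flatPoint e Y z) u)
  congr 1
  funext j
  by_cases hj : j ∈ Set.range e
  · obtain ⟨l, rfl⟩ := hj
    by_cases hl : l ∈ Set.range f
    · obtain ⟨t, rfl⟩ := hl
      rw [flatPoint_apply_embedding, flatPoint_apply_embedding,
        ← Function.Embedding.trans_apply, flatPoint_apply_embedding]
    · have hel : e l ∉ Set.range (f.trans e) := by
        rintro ⟨t, ht⟩
        exact hl ⟨t, e.injective ht⟩
      rw [flatPoint_apply_embedding, flatPoint_apply_of_notMem_range f _ _ hl,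
        flatPoint_apply_of_notMem_range _ _ _ hel, flatPoint_apply_embedding]
  · have hj' : j ∉ Set.range (f.trans e) := fun ⟨t, ht⟩ => hj ⟨f t, ht⟩
    rw [flatPoint_apply_of_notMem_range e _ _ hj, flatPoint_apply_of_notMem_range _ _ _ hj',
      flatPoint_apply_of_notMem_range e _ _ hj]

lemma sum_sum_flatPoint (e : Fin k ↪ Fin m) (g : (Fin m → Fin n) → ℝ) :
    ∑ Y, ∑ z, g (flatPoint e Y z) = Fintype.card (Fin k → Fin n) * ∑ Y, g Y := by
  have hinv : Function.Involutive fun p : (Fin m → Fin n) × (Fin k → Fin n) =>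
      (flatPoint e p.1 p.2, p.1 ∘ e) := fun ⟨Y, z⟩ => by
    simp only [flatPoint_flatPoint, flatPoint_comp_embedding]
  calc ∑ Y, ∑ z, g (flatPoint e Y z)
      = ∑ p : (Fin m → Fin n) × (Fin k → Fin n), g (hinv.toPerm _ p).1 :=
        (Fintype.sum_prod_type' _).symm
    _ = ∑ p : (Fin m → Fin n) × (Fin k → Fin n), g p.1 :=
        Equiv.sum_comp (hinv.toPerm _) fun p => g p.1
    _ = Fintype.card (Fin k → Fin n) * ∑ Y, g Y := by
        rw [Fintype.sum_prod_type, mul_sum]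
        simp only [sum_const, card_univ, nsmul_eq_mul]

lemma card_filter_trans_eq (e₁ e₁' : Fin 1 ↪ Fin m) :
    #{p : (Fin k ↪ Fin m) × (Fin 1 ↪ Fin k) | p.2.trans p.1 = e₁} =
      #{p : (Fin k ↪ Fin m) × (Fin 1 ↪ Fin k) | p.2.trans p.1 = e₁'} := by
  classical
  -- Composing with the transposition of `e₁ 0` and `e₁' 0` exchanges the two fibres.
  set σ := Equiv.swap (e₁ 0) (e₁' 0)
  have hext : ∀ f g : Fin 1 ↪ Fin m, f = g ↔ f 0 = g 0 :=
    fun f g => ⟨fun h => h ▸ rfl, fun h => DFunLike.ext f g (Fin.forall_fin_one.2 h)⟩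
  have hinv : Function.Involutive fun p : (Fin k ↪ Fin m) × (Fin 1 ↪ Fin k) =>
      (p.1.trans σ.toEmbedding, p.2) := fun p => by
    ext l
    · exact congrArg Fin.val (Equiv.swap_apply_self _ _ _)
    · rfl
  refine card_equiv (hinv.toPerm _) fun p => ?_
  simp only [mem_filter, mem_univ, true_and, Function.Involutive.coe_toPerm, hext]
  simp [σ, Equiv.swap_apply_eq_iff]

lemma sum_sum_trans_mul_card (h : (Fin 1 ↪ Fin m) → ℝ) :
    (∑ e : Fin k ↪ Fin m, ∑ f : Fin 1 ↪ Fin k, h (f.trans e)) * Fintype.card (Fin 1 ↪ Fin m) =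
      Fintype.card (Fin k ↪ Fin m) * Fintype.card (Fin 1 ↪ Fin k) * ∑ e₁, h e₁ := by
  classical
  set N : (Fin 1 ↪ Fin m) → ℕ :=
    fun e₁ => #{p : (Fin k ↪ Fin m) × (Fin 1 ↪ Fin k) | p.2.trans p.1 = e₁}
  have hsum : ∑ e : Fin k ↪ Fin m, ∑ f : Fin 1 ↪ Fin k, h (f.trans e) = ∑ e₁, N e₁ * h e₁ := by
    rw [← Fintype.sum_prod_type',
      ← sum_fiberwise' univ (fun p : (Fin k ↪ Fin m) × (Fin 1 ↪ Fin k) => p.2.trans p.1) h]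
    simp only [sum_const, nsmul_eq_mul, N]
  have hcard : Fintype.card (Fin k ↪ Fin m) * Fintype.card (Fin 1 ↪ Fin k) = ∑ e₁, N e₁ := by
    rw [← Fintype.card_prod, ← card_univ,
      card_eq_sum_card_fiberwise (f := fun p => p.2.trans p.1) fun _ _ => mem_univ _]
  calc (∑ e : Fin k ↪ Fin m, ∑ f : Fin 1 ↪ Fin k, h (f.trans e)) * Fintype.card (Fin 1 ↪ Fin m)
      = ∑ e₁, ∑ e₁' : Fin 1 ↪ Fin m, (N e₁' : ℝ) * h e₁ := by
        rw [hsum, sum_mul]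
        refine sum_congr rfl fun e₁ _ => ?_
        simp only [N, card_filter_trans_eq _ e₁, sum_const, card_univ, nsmul_eq_mul]
        ring
    _ = Fintype.card (Fin k ↪ Fin m) * Fintype.card (Fin 1 ↪ Fin k) * ∑ e₁, h e₁ := by
        rw [sum_comm, ← Fintype.sum_mul_sum, ← Nat.cast_sum, ← hcard, Nat.cast_mul]

variable {F : Type*} [Field F] [NeZero n] (C : Set (Fin n → F))

lemma sum_flatTestE_flatRestrict (x : (Fin m → Fin n) → F) (e : Fin k ↪ Fin m) :
    ∑ Y, flatTestE C k 1 (flatRestrict x e Y) =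
      (∑ f : Fin 1 ↪ Fin k, ∑ W, distTo (flatRestrict x (f.trans e) W) (tensorPow C 1)) /
        Fintype.card (Fin 1 ↪ Fin k) := by
  have hpos : (0 : ℝ) < Fintype.card (Fin k → Fin n) := Nat.cast_pos.mpr Fintype.card_pos
  simp only [flatTestE, flatRestrict_flatRestrict, ← sum_div]
  rw [sum_comm, Finset.sum_congr rfl fun (f : Fin 1 ↪ Fin k) _ => sum_sum_flatPoint e
    fun W => distTo (flatRestrict x (f.trans e) W) (tensorPow C 1), ← mul_sum, mul_comm,
    mul_div_mul_right _ _ hpos.ne']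

lemma flatTestE_line_eq_average (hk : 1 ≤ k) (hkm : k ≤ m) (x : (Fin m → Fin n) → F) :
    flatTestE C m 1 x = (∑ e : Fin k ↪ Fin m, ∑ Y, flatTestE C k 1 (flatRestrict x e Y)) /
      (Fintype.card (Fin k ↪ Fin m) * Fintype.card (Fin m → Fin n)) := by
  have : Nonempty (Fin 1 ↪ Fin k) := ⟨Fin.castLEEmb hk⟩
  have : Nonempty (Fin k ↪ Fin m) := ⟨Fin.castLEEmb hkm⟩
  have : Nonempty (Fin 1 ↪ Fin m) := ⟨Fin.castLEEmb (hk.trans hkm)⟩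
  have hcount := sum_sum_trans_mul_card (k := k)
    fun e₁ => ∑ W, distTo (flatRestrict x e₁ W) (tensorPow C 1)
  simp only [sum_flatTestE_flatRestrict]
  rw [flatTestE, ← sum_div]
  field_simp
  linear_combination -hcount

lemma flatRobustConst_mul_le (hk : 1 ≤ k) (hkm : k ≤ m) {x₀ : (Fin m → Fin n) → F}
    (hx₀ : 0 < distTo x₀ (tensorPow C m)) :
    flatRobustConst C m k * flatRobustConst C k 1 ≤ flatRobustConst C m 1 := by
  refine le_flatRobustConst C hx₀ fun x => ?_
  calc flatRobustConst C m k * flatRobustConst C k 1 * distTo x (tensorPow C m)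
      = flatRobustConst C k 1 * (flatRobustConst C m k * distTo x (tensorPow C m)) := by ring
    _ ≤ flatRobustConst C k 1 * flatTestE C m k x :=
        mul_le_mul_of_nonneg_left (flatRobustConst_mul_distTo_le C m k x)
          (flatRobustConst_nonneg C k 1)
    _ ≤ flatTestE C m 1 x := by
        rw [flatTestE_line_eq_average C hk hkm, flatTestE, mul_div_assoc', mul_sum]
        gcongr with e _
        rw [mul_sum]
        gcongr with Y _
        exact flatRobustConst_mul_distTo_le C k 1 _

end Flats

lemma le_flatRobustConst_line {F : Type*} [Field F] [Finite F] {n : ℕ}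
    {C : Set (Fin n → F)} (h0 : 0 ∈ C) {w : Fin n → F} (hw : w ∉ C) {δ : ℝ} (hδ : 0 ≤ δ)
    {m : ℕ} (hplane : ∀ k, 3 ≤ k → k ≤ m → 1 / 12 * δ ^ k ≤ flatRobustConst C k (k - 1))
    (i : ℕ) (hi : i + 2 ≤ m) :
    1 / 12 ^ i * flatRobustConst C 2 1 * δ ^ (i * (i + 5) / 2) ≤ flatRobustConst C (i + 2) 1 := by
  have : NeZero n := ⟨by rintro rfl; exact hw (Subsingleton.elim 0 w ▸ h0)⟩
  induction i with
  | zero => simp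
  | succ i ih =>
    obtain ⟨x₀, hx₀⟩ := exists_distTo_tensorPow_pos C (m := i + 3) (by omega) h0 hw
    have hexp : (i + 1) * (i + 1 + 5) / 2 = i * (i + 5) / 2 + (i + 3) := by
      rw [show (i + 1) * (i + 1 + 5) = i * (i + 5) + 2 * (i + 3) by ring,
        Nat.add_mul_div_left _ _ two_pos]
    calc 1 / 12 ^ (i + 1) * flatRobustConst C 2 1 * δ ^ ((i + 1) * (i + 1 + 5) / 2)
        = 1 / 12 * δ ^ (i + 3) * (1 / 12 ^ i * flatRobustConst C 2 1 * δ ^ (i * (i + 5) / 2)) := by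
          rw [hexp]; ring
      _ ≤ flatRobustConst C (i + 3) (i + 2) * flatRobustConst C (i + 2) 1 :=
          mul_le_mul (hplane (i + 3) (by omega) hi) (ih (by omega))
            (by have := flatRobustConst_nonneg C 2 1; positivity)
            (flatRobustConst_nonneg C _ _)
      _ ≤ flatRobustConst C (i + 3) 1 := flatRobustConst_mul_le C (by omega) (by omega) hx₀

/-- `ρ_r(T_m^1, C^{⊗m}) ≥ 12^{-(m-2)} · ρ_r(T_2^1, C^{⊗2}) · δ(C)^M`
with `M = (m-2)(m+3)/2`, given the hyperplane-test bound of Chiesa–Manohar–Shinkar. -/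
theorem stmt_7 {F : Type*} [Field F] [Fintype F] {n : ℕ} (C : Submodule F (Fin n → F))
    (m : ℕ) (hm : 2 ≤ m)
    (hCMS : ∀ k, 3 ≤ k → k ≤ m →
      (1 / 12 : ℝ) * minDist (C : Set (Fin n → F)) ^ k ≤
        flatRobustConst (C : Set (Fin n → F)) k (k - 1)) :
    (1 / (12 : ℝ) ^ (m - 2)) * flatRobustConst (C : Set (Fin n → F)) 2 1 *
        minDist (C : Set (Fin n → F)) ^ ((m - 2) * (m + 3) / 2) ≤
      flatRobustConst (C : Set (Fin n → F)) m 1 := by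
  by_cases hC : ∀ w, w ∈ (C : Set (Fin n → F))
  · rw [flatRobustConst_eq_zero_of_forall_mem _ hC, mul_zero, zero_mul]
    exact flatRobustConst_nonneg _ m 1
  obtain ⟨w, hw⟩ := not_forall.mp hC
  obtain ⟨i, rfl⟩ : ∃ i, m = i + 2 := ⟨m - 2, by omega⟩
  simpa using le_flatRobustConst_line C.zero_mem hw (minDist_nonneg _) hCMS i le_rfl
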